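/- arXiv:math/0108208 — 2 statements merged into one kernel-verified Lean document; each statement's English description precedes it below -/
import Mathlib

section
/- Let Λ be a local noetherian ring with residue field κ. If K₁ and K₂ are perfect complexes of Λ-modules whose differentials are zero modulo the maximal ideal, and f : K₁ → K₂ is a homotopy equivalence of complexes, then f is an isomorphism of complexes. -/
/-!
A homotopy `h : f ≫ g ≃ 𝟙` gives `(f ≫ g) - 𝟙 = d h + h d` in each degree, and both terms land in
`𝔪 • K₁ⁱ` because the differentials do. So `f ≫ g` is the identity modulo `𝔪`, hence surjective in
each degree by Nakayama, hence bijective since a surjective endomorphism of a finitely generated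
module is injective. The same holds for `g ≫ f`, so every component of `f` is bijective.
-/

open CategoryTheory

theorem LinearMap.bijective_of_sub_mem_smul_top {R M : Type*} [CommRing R] [AddCommGroup M]
    [Module R M] [Module.Finite R M] {I : Ideal R} (hI : I ≤ (⊥ : Ideal R).jacobson)
    (e : M →ₗ[R] M) (he : ∀ x, e x - x ∈ I • (⊤ : Submodule R M)) : Function.Bijective e := by
  refine OrzechProperty.bijective_of_surjective_endomorphism e
    (e.surjective_of_surjective_comp_mkQ I hI ?_)
  have hmod : (I • ⊤ : Submodule R M).mkQ ∘ₗ e = (I • ⊤ : Submodule R M).mkQ :=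
    LinearMap.ext fun x => (Submodule.Quotient.eq _).2 (he x)
  rw [hmod]
  exact Submodule.mkQ_surjective _

namespace Homotopy

variable {R : Type*} [CommRing R] {ι : Type*} {c : ComplexShape ι}
  {K L : HomologicalComplex (ModuleCat R) c} {I : Ideal R}

theorem f_sub_f_mem_smul_top {φ ψ : K ⟶ L} (h : Homotopy φ ψ)
    (hK : ∀ i j, LinearMap.range (K.d i j).hom ≤ I • ⊤)
    (hL : ∀ i j, LinearMap.range (L.d i j).hom ≤ I • ⊤) (i : ι) (x : K.X i) :
    φ.f i x - ψ.f i x ∈ I • (⊤ : Submodule R (L.X i)) := by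
  have hnext : dNext i h.hom x ∈ I • (⊤ : Submodule R (L.X i)) :=
    Submodule.smul_top_le_comap_smul_top I (h.hom (c.next i) i).hom (hK i (c.next i) ⟨x, rfl⟩)
  have hprev : prevD i h.hom x ∈ I • (⊤ : Submodule R (L.X i)) :=
    hL (c.prev i) i ⟨_, rfl⟩
  rw [h.comm i]
  simpa using Submodule.add_mem _ hnext hprev

theorem bijective_f_of_le_jacobson {φ : K ⟶ K} (h : Homotopy φ (𝟙 K))
    (hK : ∀ i j, LinearMap.range (K.d i j).hom ≤ I • ⊤) (hI : I ≤ (⊥ : Ideal R).jacobson)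
    (i : ι) [Module.Finite R (K.X i)] : Function.Bijective (φ.f i).hom :=
  LinearMap.bijective_of_sub_mem_smul_top hI (φ.f i).hom (h.f_sub_f_mem_smul_top hK hK i)

end Homotopy

theorem stmt_1_general (Λ : Type) [CommRing Λ] [IsLocalRing Λ]
    (K₁ K₂ : CochainComplex (ModuleCat Λ) ℤ)
    (hfin₁ : ∀ i, Module.Finite Λ (K₁.X i))
    (hfin₂ : ∀ i, Module.Finite Λ (K₂.X i))
    (hd₁ : ∀ i j, LinearMap.range (K₁.d i j).hom ≤
      (IsLocalRing.maximalIdeal Λ) • (⊤ : Submodule Λ (K₁.X j)))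
    (hd₂ : ∀ i j, LinearMap.range (K₂.d i j).hom ≤
      (IsLocalRing.maximalIdeal Λ) • (⊤ : Submodule Λ (K₂.X j)))
    (f : K₁ ⟶ K₂) (g : K₂ ⟶ K₁)
    (h₁ : Nonempty (Homotopy (f ≫ g) (𝟙 K₁)))
    (h₂ : Nonempty (Homotopy (g ≫ f) (𝟙 K₂))) :
    IsIso f := by
  obtain ⟨H₁⟩ := h₁
  obtain ⟨H₂⟩ := h₂
  have hm : IsLocalRing.maximalIdeal Λ ≤ (⊥ : Ideal Λ).jacobson :=
    (IsLocalRing.jacobson_eq_maximalIdeal ⊥ bot_ne_top).ge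
  have hcomp : ∀ i, IsIso (f.f i) := fun i => by
    have := hfin₁ i
    have := hfin₂ i
    have hfg := H₁.bijective_f_of_le_jacobson hd₁ hm i
    have hgf := H₂.bijective_f_of_le_jacobson hd₂ hm i
    simp only [HomologicalComplex.comp_f, ModuleCat.hom_comp, LinearMap.coe_comp] at hfg hgf
    exact (ConcreteCategory.isIso_iff_bijective _).2 ⟨hfg.1.of_comp, hgf.2.of_comp⟩
  exact HomologicalComplex.Hom.isIso_of_components f

theorem stmt_1 (Λ : Type) [CommRing Λ] [IsLocalRing Λ] [IsNoetherianRing Λ]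
    (K₁ K₂ : CochainComplex (ModuleCat Λ) ℤ)
    (hfree₁ : ∀ i, Module.Free Λ (K₁.X i)) (hfin₁ : ∀ i, Module.Finite Λ (K₁.X i))
    (hbdd₁ : ∃ a b : ℤ, ∀ i, (i < a ∨ b < i) → Subsingleton (K₁.X i))
    (hfree₂ : ∀ i, Module.Free Λ (K₂.X i)) (hfin₂ : ∀ i, Module.Finite Λ (K₂.X i))
    (hbdd₂ : ∃ a b : ℤ, ∀ i, (i < a ∨ b < i) → Subsingleton (K₂.X i))
    (hd₁ : ∀ i j, LinearMap.range (K₁.d i j).hom ≤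
      (IsLocalRing.maximalIdeal Λ) • (⊤ : Submodule Λ (K₁.X j)))
    (hd₂ : ∀ i j, LinearMap.range (K₂.d i j).hom ≤
      (IsLocalRing.maximalIdeal Λ) • (⊤ : Submodule Λ (K₂.X j)))
    (f : K₁ ⟶ K₂) (g : K₂ ⟶ K₁)
    (h₁ : Nonempty (Homotopy (f ≫ g) (𝟙 K₁)))
    (h₂ : Nonempty (Homotopy (g ≫ f) (𝟙 K₂))) :
    IsIso f :=
  stmt_1_general Λ K₁ K₂ hfin₁ hfin₂ hd₁ hd₂ f g h₁ h₂
end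

section
/- Let 𝒪 be a complete DVR with fraction field E of characteristic 0, A a local Artin E-algebra with residue field E and maximal ideal n. Let A' ⊆ A be an 𝒪-subalgebra that is finite as 𝒪-module with A' ⊗_𝒪 E ≅ A, let M be a free A-module of rank m, and M' ⊆ M a finitely generated A'-submodule with M' ⊗_𝒪 E ≅ M. Then there exists an 𝒪-subalgebra A'' with A' ⊆ A'' ⊆ A, finite as 𝒪-module, such that A''·M' is a free A''-module of rank m; moreover the image of A''·M' in M/nM equals the image M'₀ of M', and A''M' ⊗_{A''} 𝒪 ≅ M'₀. -/
/-!
Reduction modulo `n` is a retraction `ρ : A → E` of `E → A`, and coordinates in a basis of `M`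
reduce to an `E`-linear surjection `M → E^m`. The image of `M'` is an `𝒪`-lattice in `E^m`;
lifting an `𝒪`-basis of it to `M'` gives an `A`-basis `v` of `M` inside `M'` (its determinant is
a unit because its residue is), in which every element of `M'` has coordinates in `𝒪 + n`.
Adjoining to `A'` the coordinates of finitely many generators of `M'` gives `A''`. Since `n` is
nilpotent, `𝒪 + n` is integral over `𝒪` and contains `A''`, so `A''` is finite over `𝒪`; and
`A''M'` is exactly the set of vectors with `A''`-coordinates in `v`. The two statements about
`M/nM` then follow from `A'' ⊆ 𝒪 + n`.
-/

open IsLocalRing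

theorem IsNilpotent.isIntegral {R B : Type*} [CommRing R] [Ring B] [Algebra R B] {x : B}
    (hx : IsNilpotent x) : IsIntegral R x := by
  obtain ⟨k, hk⟩ := hx
  exact .of_pow k.succ_pos (by rw [_root_.pow_succ, hk, zero_mul]; exact isIntegral_zero)

theorem IsLocalRing.isNilpotent_of_mem_maximalIdeal {A : Type*} [CommRing A] [IsLocalRing A]
    [IsArtinianRing A] {x : A} (hx : x ∈ maximalIdeal A) : IsNilpotent x := by
  rwa [← jacobson_eq_maximalIdeal ⊥ bot_ne_top, IsArtinianRing.jacobson_eq_radical] at hx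

theorem IsLocalRing.nonempty_algHom_of_bijective_residue {E A : Type*} [Field E] [CommRing A]
    [IsLocalRing A] [Algebra E A] (h : Function.Bijective ((residue A).comp (algebraMap E A))) :
    Nonempty (A →ₐ[E] E) :=
  ⟨((AlgEquiv.ofBijective (Algebra.ofId E (ResidueField A)) h).symm : _ →ₐ[E] E).comp
    (IsScalarTower.toAlgHom E A (ResidueField A))⟩

theorem AlgHom.surjective_onto_base {E A : Type*} [Field E] [CommRing A] [Algebra E A]
    (ρ : A →ₐ[E] E) : Function.Surjective ρ :=
  fun e => ⟨algebraMap E A e, ρ.commutes e⟩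

namespace AlgHom

variable {𝒪 E A : Type*} [CommRing 𝒪] [Field E] [CommRing A] [IsLocalRing A]
  [Algebra 𝒪 E] [Algebra E A] [Algebra 𝒪 A] [IsScalarTower 𝒪 E A]

theorem ker_eq_maximalIdeal (ρ : A →ₐ[E] E) : RingHom.ker ρ = maximalIdeal A :=
  eq_maximalIdeal (RingHom.ker_isMaximal_of_surjective ρ ρ.surjective_onto_base)

theorem sub_algebraMap_mem_maximalIdeal_of_apply_eq (ρ : A →ₐ[E] E) {a : A} {o : 𝒪}
    (h : ρ a = algebraMap 𝒪 E o) : a - algebraMap 𝒪 A o ∈ maximalIdeal A := by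
  rw [← ρ.ker_eq_maximalIdeal, RingHom.mem_ker, IsScalarTower.algebraMap_apply 𝒪 E A]
  simp [h]

theorem isIntegral_of_apply_mem_range [IsArtinianRing A] (ρ : A →ₐ[E] E) {a : A}
    (h : ρ a ∈ (algebraMap 𝒪 E).range) : IsIntegral 𝒪 a := by
  obtain ⟨o, ho⟩ := h
  have hn := isNilpotent_of_mem_maximalIdeal
    (ρ.sub_algebraMap_mem_maximalIdeal_of_apply_eq ho.symm)
  simpa using (isIntegral_algebraMap (x := o)).add hn.isIntegral

theorem exists_sub_mem_maximalIdeal_of_isIntegral [IsDomain 𝒪] [IsIntegrallyClosed 𝒪]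
    [IsFractionRing 𝒪 E] (ρ : A →ₐ[E] E) {a : A} (h : IsIntegral 𝒪 a) :
    ∃ o : 𝒪, a - algebraMap 𝒪 A o ∈ maximalIdeal A := by
  obtain ⟨o, ho⟩ := IsIntegrallyClosed.isIntegral_iff.mp (h.map (ρ.restrictScalars 𝒪))
  exact ⟨o, ρ.sub_algebraMap_mem_maximalIdeal_of_apply_eq ho.symm⟩

end AlgHom

theorem Submodule.IsLattice.exists_basis_span_eq {R K V ι : Type*} [CommRing R] [IsDomain R]
    [IsPrincipalIdealRing R] [Field K] [Algebra R K] [IsFractionRing R K] [AddCommGroup V]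
    [Module K V] [Module R V] [IsScalarTower R K V] (bV : Module.Basis ι K V)
    (L : Submodule R V) [L.IsLattice K] :
    ∃ w : Module.Basis ι K V, Submodule.span R (Set.range w) = L := by
  let b := (Module.Free.chooseBasis R L).extendOfIsLattice K
  refine ⟨b.reindex (b.indexEquiv bV), ?_⟩
  have hb : ⇑b = L.subtype ∘ Module.Free.chooseBasis R L := by
    funext k; exact Module.Basis.extendOfIsLattice_apply K _ k
  rw [Module.Basis.range_reindex, hb, Set.range_comp, Submodule.span_image,
    Module.Basis.span_eq, Submodule.map_top, Submodule.range_subtype]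

namespace Module.Basis

section Residue

variable {E A ι M : Type*} [Field E] [CommRing A] [Algebra E A] [AddCommGroup M] [Module A M]
  [Module E M] [IsScalarTower E A M]

noncomputable def residueCoords (b : Basis ι A M) (ρ : A →ₐ[E] E) : M →ₗ[E] (ι → E) :=
  LinearMap.pi fun i => ρ.toLinearMap ∘ₗ (b.coord i).restrictScalars E

@[simp]
theorem residueCoords_apply (b : Basis ι A M) (ρ : A →ₐ[E] E) (x : M) (i : ι) :
    b.residueCoords ρ x i = ρ (b.repr x i) := rfl

theorem residueCoords_smul (b : Basis ι A M) (ρ : A →ₐ[E] E) (a : A) (x : M) :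
    b.residueCoords ρ (a • x) = ρ a • b.residueCoords ρ x := by
  ext i; simp

theorem residueCoords_surjective [Fintype ι] [DecidableEq ι] (b : Basis ι A M) (ρ : A →ₐ[E] E) :
    Function.Surjective (b.residueCoords ρ) := by
  rw [← LinearMap.range_eq_top, eq_top_iff, ← (Pi.basisFun E ι).span_eq, Submodule.span_le]
  rintro _ ⟨i, rfl⟩
  refine ⟨b i, funext fun j => ?_⟩
  simp [Finsupp.single_apply, Pi.single_apply, eq_comm]

theorem repr_residueCoords [Fintype ι] (b bv : Basis ι A M) (ρ : A →ₐ[E] E)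
    (w : Basis ι E (ι → E)) (h : ∀ j, b.residueCoords ρ (bv j) = w j) (x : M) (j : ι) :
    w.repr (b.residueCoords ρ x) j = ρ (bv.repr x j) := by
  conv_lhs => rw [← bv.sum_repr x]
  simp only [map_sum (b.residueCoords ρ), residueCoords_smul, h]
  exact congrFun (w.repr_sum_self _) j

theorem exists_basis_eq_of_residueCoords [Fintype ι] [DecidableEq ι] [IsLocalRing A]
    (b : Basis ι A M) (ρ : A →ₐ[E] E) (w : Basis ι E (ι → E)) (v : ι → M)
    (hv : ∀ j, b.residueCoords ρ (v j) = w j) : ∃ bv : Basis ι A M, ⇑bv = v := by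
  have : IsLocalHom ρ.toRingHom := .of_surjective _ ρ.surjective_onto_base
  have hmat : ρ.toRingHom.mapMatrix (b.toMatrix v) = (Pi.basisFun E ι).toMatrix w := by
    ext i j; simp [toMatrix_apply, ← hv j]
  have hdet : IsUnit (b.det v) := by
    refine IsUnit.of_map ρ.toRingHom _ ?_
    rw [det_apply, RingHom.map_det, hmat, ← det_apply]
    exact (Pi.basisFun E ι).isUnit_det w
  obtain ⟨hli, hspan⟩ := (is_basis_iff_det b).mpr hdet
  exact ⟨.mk hli hspan.ge, coe_mk hli hspan.ge⟩

theorem exists_basis_mem_and_residue_repr_mem_range {𝒪 : Type*} [CommRing 𝒪] [IsDomain 𝒪]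
    [IsPrincipalIdealRing 𝒪] [Algebra 𝒪 E] [IsFractionRing 𝒪 E] [Module 𝒪 M]
    [IsScalarTower 𝒪 E M] [Fintype ι] [DecidableEq ι] [IsLocalRing A]
    (b : Basis ι A M) (ρ : A →ₐ[E] E) {M' : Submodule 𝒪 M} (hfg : M'.FG)
    (hspan : Submodule.span E (M' : Set M) = ⊤) :
    ∃ bv : Basis ι A M, (∀ j, bv j ∈ M') ∧
      ∀ x ∈ M', ∀ j, ρ (bv.repr x j) ∈ (algebraMap 𝒪 E).range := by
  let φ := b.residueCoords ρ
  let L := M'.map (φ.restrictScalars 𝒪)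
  have : L.IsLattice E := ⟨hfg.map _, by
    rw [Submodule.map_coe, LinearMap.coe_restrictScalars, Submodule.span_image, hspan,
      Submodule.map_top, LinearMap.range_eq_top.mpr (b.residueCoords_surjective ρ)]⟩
  obtain ⟨w, hw⟩ := Submodule.IsLattice.exists_basis_span_eq (Pi.basisFun E ι) L
  have hwL (j : ι) : ∃ v ∈ M', φ v = w j := (hw ▸ Submodule.subset_span ⟨j, rfl⟩ : w j ∈ L)
  choose v hvM' hvw using hwL
  obtain ⟨bv, rfl⟩ := b.exists_basis_eq_of_residueCoords ρ w v hvw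
  refine ⟨bv, hvM', fun x hx j => ?_⟩
  rw [← b.repr_residueCoords bv ρ w hvw]
  exact (w.mem_span_iff_repr_mem 𝒪 _).mp (hw ▸ ⟨x, hx, rfl⟩) j

end Residue

section Coords

variable {𝒪 A ι M : Type*} [CommRing 𝒪] [CommRing A] [Algebra 𝒪 A] [AddCommGroup M] [Module A M]
  [Module 𝒪 M] [IsScalarTower 𝒪 A M]

noncomputable def coordsIn (b : Basis ι A M) (B : Subalgebra 𝒪 A) : Submodule 𝒪 M :=
  ⨅ i, (Subalgebra.toSubmodule B).comap ((b.coord i).restrictScalars 𝒪)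

@[simp]
theorem mem_coordsIn {b : Basis ι A M} {B : Subalgebra 𝒪 A} {x : M} :
    x ∈ b.coordsIn B ↔ ∀ i, b.repr x i ∈ B := by
  simp [coordsIn]

theorem smul_mem_coordsIn {b : Basis ι A M} {B : Subalgebra 𝒪 A} {a : A} (ha : a ∈ B) {x : M}
    (hx : x ∈ b.coordsIn B) : a • x ∈ b.coordsIn B :=
  mem_coordsIn.mpr fun i => by simpa using B.mul_mem ha (mem_coordsIn.mp hx i)

theorem basis_mem_coordsIn (b : Basis ι A M) (B : Subalgebra 𝒪 A) (j : ι) : b j ∈ b.coordsIn B :=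
  mem_coordsIn.mpr fun i => by
    classical
    rw [repr_self, Finsupp.single_apply]
    split_ifs
    exacts [B.one_mem, B.zero_mem]

theorem repr_mem_of_mem_smul_top (b : Basis ι A M) {I : Ideal A} {x : M}
    (hx : x ∈ I • (⊤ : Submodule A M)) (i : ι) : b.repr x i ∈ I := by
  have : I • (⊤ : Submodule A M) ≤ Submodule.comap (b.coord i) I :=
    Submodule.smul_le.mpr fun r hr y _ => by simpa using I.mul_mem_right _ hr
  exact this hx

variable [Fintype ι]

theorem span_smul_eq_coordsIn (b : Basis ι A M) (B : Subalgebra 𝒪 A) {M' : Submodule 𝒪 M}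
    (hb : ∀ j, b j ∈ M') (hM' : M' ≤ b.coordsIn B) :
    Submodule.span 𝒪 {y : M | ∃ a ∈ B, ∃ x ∈ M', y = a • x} = b.coordsIn B := by
  refine le_antisymm (Submodule.span_le.mpr ?_) fun y hy => ?_
  · rintro _ ⟨a, ha, x, hx, rfl⟩
    exact smul_mem_coordsIn ha (hM' hx)
  · rw [← b.sum_repr y]
    exact Submodule.sum_mem _ fun j _ =>
      Submodule.subset_span ⟨_, mem_coordsIn.mp hy j, b j, hb j, rfl⟩

theorem existsUnique_eq_sum_of_mem_coordsIn {b : Basis ι A M} {B : Subalgebra 𝒪 A} {y : M}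
    (hy : y ∈ b.coordsIn B) : ∃! c : ι → B, y = ∑ i, (c i : A) • b i := by
  refine ⟨fun i => ⟨b.repr y i, mem_coordsIn.mp hy i⟩, (b.sum_repr y).symm,
    fun c (hc : y = _) => funext fun i => Subtype.ext ?_⟩
  exact (by rw [hc, b.repr_sum_self] : b.repr y i = c i).symm

theorem mem_smul_top_iff_mem_span_smul (b : Basis ι A M) (B : Subalgebra 𝒪 A) (I : Ideal A)
    {y : M} (hy : y ∈ b.coordsIn B) :
    y ∈ I • (⊤ : Submodule A M) ↔
      y ∈ Submodule.span 𝒪 {z : M | ∃ a ∈ B, a ∈ I ∧ ∃ x ∈ b.coordsIn B, z = a • x} := by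
  refine ⟨fun hyI => ?_, fun hy' => ?_⟩
  · rw [← b.sum_repr y]
    refine Submodule.sum_mem _ fun j _ => Submodule.subset_span
      ⟨_, mem_coordsIn.mp hy j, b.repr_mem_of_mem_smul_top hyI j, b j, ?_, rfl⟩
    exact b.basis_mem_coordsIn B j
  · have : Submodule.span 𝒪 {z : M | ∃ a ∈ B, a ∈ I ∧ ∃ x ∈ b.coordsIn B, z = a • x} ≤
        (I • (⊤ : Submodule A M)).restrictScalars 𝒪 := by
      refine Submodule.span_le.mpr ?_
      rintro _ ⟨a, -, ha, x, -, rfl⟩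
      exact (Submodule.restrictScalars_mem 𝒪 _ _).mpr
        (Submodule.smul_mem_smul ha Submodule.mem_top)
    exact this hy'

theorem exists_mem_sub_mem_smul_top_of_repr_sub_algebraMap_mem (b : Basis ι A M)
    {M' : Submodule 𝒪 M} (hb : ∀ j, b j ∈ M') (I : Ideal A) {y : M}
    (hy : ∀ j, ∃ o : 𝒪, b.repr y j - algebraMap 𝒪 A o ∈ I) :
    ∃ y' ∈ M', y - y' ∈ I • (⊤ : Submodule A M) := by
  choose o ho using hy
  refine ⟨∑ j, o j • b j, Submodule.sum_mem _ fun j _ => M'.smul_mem _ (hb j), ?_⟩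
  have : y - ∑ j, o j • b j = ∑ j, (b.repr y j - algebraMap 𝒪 A (o j)) • b j := by
    simp_rw [sub_smul, Finset.sum_sub_distrib, algebraMap_smul, b.sum_repr]
  rw [this]
  exact Submodule.sum_mem _ fun j _ => Submodule.smul_mem_smul (ho j) Submodule.mem_top

theorem exists_mem_coordsIn_sub_mem_smul_top_iff (b : Basis ι A M) {B : Subalgebra 𝒪 A}
    {M' : Submodule 𝒪 M} (hb : ∀ j, b j ∈ M') (hM' : M' ≤ b.coordsIn B) {I : Ideal A}
    (hB : ∀ a ∈ B, ∃ o : 𝒪, a - algebraMap 𝒪 A o ∈ I) (x : M) :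
    (∃ y ∈ b.coordsIn B, x - y ∈ I • (⊤ : Submodule A M)) ↔
      ∃ y ∈ M', x - y ∈ I • (⊤ : Submodule A M) := by
  refine ⟨fun ⟨y, hy, hxy⟩ => ?_, fun ⟨y, hy, hxy⟩ => ⟨y, hM' hy, hxy⟩⟩
  obtain ⟨y', hy', hyy'⟩ := b.exists_mem_sub_mem_smul_top_of_repr_sub_algebraMap_mem hb I
    fun j => hB _ (mem_coordsIn.mp hy j)
  exact ⟨y', hy', by simpa using Submodule.add_mem _ hxy hyy'⟩

end Coords

end Module.Basis

theorem stmt_13_general (𝒪 E A : Type) [CommRing 𝒪] [IsDomain 𝒪] [IsDiscreteValuationRing 𝒪]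
    [Field E] [Algebra 𝒪 E] [IsFractionRing 𝒪 E]
    [CommRing A] [IsLocalRing A] [IsArtinianRing A]
    [Algebra E A] [Algebra 𝒪 A] [IsScalarTower 𝒪 E A]
    (hres : Function.Bijective ((residue A).comp (algebraMap E A)))
    (A' : Subalgebra 𝒪 A) (hA'fin : Module.Finite 𝒪 A')
    (m : ℕ) (M : Type) [AddCommGroup M] [Module A M]
    [Module E M] [Module 𝒪 M] [IsScalarTower E A M] [IsScalarTower 𝒪 E M]
    [IsScalarTower 𝒪 A M]
    (bM : Module.Basis (Fin m) A M)
    (M' : Submodule 𝒪 M) (hM'fg : M'.FG)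
    (hM'span : Submodule.span E (M' : Set M) = ⊤) :
    ∃ A'' : Subalgebra 𝒪 A, A' ≤ A'' ∧ Module.Finite 𝒪 A'' ∧
      -- `N = A''·M'` is a free `A''`-module of rank `m` …
      (∃ v : Fin m → M,
        (∀ i, v i ∈ Submodule.span 𝒪 {y : M | ∃ a ∈ A'', ∃ x ∈ M', y = a • x}) ∧
        (∀ y ∈ Submodule.span 𝒪 {y : M | ∃ a ∈ A'', ∃ x ∈ M', y = a • x},
          ∃! c : Fin m → A'', y = ∑ i, (c i : A) • v i)) ∧
      -- … with the same image in `M/nM` as `M'` …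
      (∀ x : M,
        (∃ y ∈ Submodule.span 𝒪 {y : M | ∃ a ∈ A'', ∃ x ∈ M', y = a • x},
            x - y ∈ (maximalIdeal A • ⊤ : Submodule A M)) ↔
        (∃ y ∈ M', x - y ∈ (maximalIdeal A • ⊤ : Submodule A M))) ∧
      -- … and `N ⊗_{A''} 𝒪 ≅ M'₀`: the kernel of `N → M/nM` is `(A'' ∩ n)·N`
      (∀ y ∈ Submodule.span 𝒪 {y : M | ∃ a ∈ A'', ∃ x ∈ M', y = a • x},
        (y ∈ (maximalIdeal A • ⊤ : Submodule A M) ↔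
          y ∈ Submodule.span 𝒪 {z : M | ∃ a ∈ A'', a ∈ maximalIdeal A ∧
            ∃ x ∈ Submodule.span 𝒪 {y : M | ∃ a ∈ A'', ∃ x ∈ M', y = a • x},
              z = a • x})) := by
  obtain ⟨ρ⟩ := nonempty_algHom_of_bijective_residue hres
  obtain ⟨bv, hbvM', hbvρ⟩ := bM.exists_basis_mem_and_residue_repr_mem_range ρ hM'fg hM'span
  obtain ⟨s, hs⟩ := hM'fg
  let S : Set A := Set.range fun p : s × Fin m => bv.repr p.1 p.2
  have hSint : ∀ a ∈ S, IsIntegral 𝒪 a := by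
    rintro _ ⟨⟨⟨g, hg⟩, j⟩, rfl⟩
    exact ρ.isIntegral_of_apply_mem_range (hbvρ g (hs ▸ Submodule.subset_span hg) j)
  let A'' := A' ⊔ Algebra.adjoin 𝒪 S
  have : Module.Finite 𝒪 (Algebra.adjoin 𝒪 S) :=
    Algebra.finite_adjoin_of_finite_of_isIntegral (Set.finite_range _) hSint
  have hA''fin : Module.Finite 𝒪 A'' := Subalgebra.finite_sup _ _
  have hM'le : M' ≤ bv.coordsIn A'' :=
    hs ▸ Submodule.span_le.mpr fun g hg => Module.Basis.mem_coordsIn.mpr fun j =>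
      le_sup_right (a := A') (Algebra.subset_adjoin ⟨(⟨g, hg⟩, j), rfl⟩)
  have hA''res (a : A) (ha : a ∈ A'') : ∃ o : 𝒪, a - algebraMap 𝒪 A o ∈ maximalIdeal A :=
    ρ.exists_sub_mem_maximalIdeal_of_isIntegral
      (IsIntegral.of_mem_of_fg A'' (Module.Finite.iff_fg.mp hA''fin) a ha)
  refine ⟨A'', le_sup_left, hA''fin, ?_⟩
  rw [bv.span_smul_eq_coordsIn A'' hbvM' hM'le]
  exact ⟨⟨bv, bv.basis_mem_coordsIn A'', fun _ => Module.Basis.existsUnique_eq_sum_of_mem_coordsIn⟩,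
    bv.exists_mem_coordsIn_sub_mem_smul_top_iff hbvM' hM'le hA''res,
    fun y hy => bv.mem_smul_top_iff_mem_span_smul A'' _ hy⟩

theorem stmt_13 (𝒪 E A : Type) [CommRing 𝒪] [IsDomain 𝒪] [IsDiscreteValuationRing 𝒪]
    [IsAdicComplete (maximalIdeal 𝒪) 𝒪]
    [Field E] [Algebra 𝒪 E] [IsFractionRing 𝒪 E] [CharZero E]
    [CommRing A] [IsLocalRing A] [IsArtinianRing A]
    [Algebra E A] [Algebra 𝒪 A] [IsScalarTower 𝒪 E A]
    (hres : Function.Bijective ((residue A).comp (algebraMap E A)))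
    (A' : Subalgebra 𝒪 A) (hA'fin : Module.Finite 𝒪 A')
    (hA'span : Submodule.span E (A' : Set A) = ⊤)
    (m : ℕ) (M : Type) [AddCommGroup M] [Module A M]
    [Module E M] [Module 𝒪 M] [IsScalarTower E A M] [IsScalarTower 𝒪 E M]
    [IsScalarTower 𝒪 A M]
    (bM : Module.Basis (Fin m) A M)
    (M' : Submodule 𝒪 M) (hM'fg : M'.FG)
    (hM'stable : ∀ a ∈ A', ∀ x ∈ M', a • x ∈ M')
    (hM'span : Submodule.span E (M' : Set M) = ⊤) :
    ∃ A'' : Subalgebra 𝒪 A, A' ≤ A'' ∧ Module.Finite 𝒪 A'' ∧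
      -- `N = A''·M'` is a free `A''`-module of rank `m` …
      (∃ v : Fin m → M,
        (∀ i, v i ∈ Submodule.span 𝒪 {y : M | ∃ a ∈ A'', ∃ x ∈ M', y = a • x}) ∧
        (∀ y ∈ Submodule.span 𝒪 {y : M | ∃ a ∈ A'', ∃ x ∈ M', y = a • x},
          ∃! c : Fin m → A'', y = ∑ i, (c i : A) • v i)) ∧
      -- … with the same image in `M/nM` as `M'` …
      (∀ x : M,
        (∃ y ∈ Submodule.span 𝒪 {y : M | ∃ a ∈ A'', ∃ x ∈ M', y = a • x},
            x - y ∈ (maximalIdeal A • ⊤ : Submodule A M)) ↔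
        (∃ y ∈ M', x - y ∈ (maximalIdeal A • ⊤ : Submodule A M))) ∧
      -- … and `N ⊗_{A''} 𝒪 ≅ M'₀`: the kernel of `N → M/nM` is `(A'' ∩ n)·N`
      (∀ y ∈ Submodule.span 𝒪 {y : M | ∃ a ∈ A'', ∃ x ∈ M', y = a • x},
        (y ∈ (maximalIdeal A • ⊤ : Submodule A M) ↔
          y ∈ Submodule.span 𝒪 {z : M | ∃ a ∈ A'', a ∈ maximalIdeal A ∧
            ∃ x ∈ Submodule.span 𝒪 {y : M | ∃ a ∈ A'', ∃ x ∈ M', y = a • x},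
              z = a • x})) :=
  stmt_13_general 𝒪 E A hres A' hA'fin m M bM M' hM'fg hM'span
end
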